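/- Let X and Y be real-valued random variables with finite range on a discrete probability space, and let Z = aX + bY for real constants a and b with a ≠ 0 and b ≠ 0. Then the three joint Shannon entropies coincide: H(X, Y) = H(X, Z) = H(Y, Z). -/

import Mathlib

open MeasureTheory

/-- Shannon entropy of a discrete random variable `X`:
`H(X) = -∑ₓ p(X = x) log p(X = x)` (sum over all values; terms with zero
probability vanish since `negMulLog 0 = 0`). -/
noncomputable def entropy {Ω S : Type*} [MeasurableSpace Ω] (μ : Measure Ω)
    (X : Ω → S) : ℝ :=
  ∑' s : S, Real.negMulLog (μ (X ⁻¹' {s})).toReal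

/-- Conditional Shannon entropy of `Y` given `X`:
`H(Y|X) = -∑_{x,y} p(X = x, Y = y) log p(Y = y | X = x)`. -/
noncomputable def condEntropy {Ω S T : Type*} [MeasurableSpace Ω] (μ : Measure Ω)
    (Y : Ω → T) (X : Ω → S) : ℝ :=
  -∑' p : S × T,
      (μ (X ⁻¹' {p.1} ∩ Y ⁻¹' {p.2})).toReal *
        Real.log ((μ (X ⁻¹' {p.1} ∩ Y ⁻¹' {p.2})).toReal / (μ (X ⁻¹' {p.1})).toReal)

open Function

/- Since `a, b ≠ 0`, both `(X, Z)` and `(Y, Z)` are images of `(X, Y)` under injective linear maps,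
and entropy is invariant under an injective relabelling of values: the nonzero point masses are
the same, and every value outside the range has probability zero, contributing `negMulLog 0 = 0`. -/

theorem entropy_comp_of_injective {Ω S T : Type*} [MeasurableSpace Ω] (μ : Measure Ω)
    (W : Ω → S) {f : S → T} (hf : Injective f) : entropy μ (f ∘ W) = entropy μ W := by
  unfold entropy
  have h_preimage (s : S) : (f ∘ W) ⁻¹' {f s} = W ⁻¹' {s} := by
    ext ω; simp [hf.eq_iff]
  have h_support : (support fun t => Real.negMulLog (μ ((f ∘ W) ⁻¹' {t})).toReal) ⊆ Set.range f := by
    intro t ht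
    by_contra h_notin
    have h_empty : (f ∘ W) ⁻¹' {t} = ∅ :=
      Set.eq_empty_of_forall_notMem fun ω hω => h_notin ⟨W ω, hω⟩
    simp [h_empty] at ht
  rw [← hf.tsum_eq h_support]
  simp only [h_preimage]

section LinearCombination

variable {R : Type*} [CommRing R] [IsDomain R]

theorem injective_fst_mul_add_mul (a : R) {b : R} (hb : b ≠ 0) :
    Injective fun p : R × R => (p.1, a * p.1 + b * p.2) := by
  rintro ⟨x₁, y₁⟩ ⟨x₂, y₂⟩ h
  simp only [Prod.mk.injEq] at h
  obtain ⟨rfl, h_comb⟩ := h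
  exact Prod.ext rfl (mul_left_cancel₀ hb (add_left_cancel h_comb))

theorem injective_snd_mul_add_mul {a : R} (ha : a ≠ 0) (b : R) :
    Injective fun p : R × R => (p.2, a * p.1 + b * p.2) := by
  rintro ⟨x₁, y₁⟩ ⟨x₂, y₂⟩ h
  simp only [Prod.mk.injEq] at h
  obtain ⟨rfl, h_comb⟩ := h
  exact Prod.ext (mul_left_cancel₀ ha (add_right_cancel h_comb)) rfl

end LinearCombination

theorem jointEntropy_eq_of_linear_comb_general {Ω : Type*} [MeasurableSpace Ω]
    (μ : Measure Ω)
    (X Y : Ω → ℝ)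
    (a b : ℝ) (ha : a ≠ 0) (hb : b ≠ 0) :
    entropy μ (fun ω => (X ω, Y ω)) =
        entropy μ (fun ω => (X ω, a * X ω + b * Y ω)) ∧
      entropy μ (fun ω => (X ω, a * X ω + b * Y ω)) =
        entropy μ (fun ω => (Y ω, a * X ω + b * Y ω)) := by
  have hXZ : entropy μ (fun ω => (X ω, a * X ω + b * Y ω)) = entropy μ (fun ω => (X ω, Y ω)) :=
    entropy_comp_of_injective μ (fun ω => (X ω, Y ω)) (injective_fst_mul_add_mul a hb)
  have hYZ : entropy μ (fun ω => (Y ω, a * X ω + b * Y ω)) = entropy μ (fun ω => (X ω, Y ω)) :=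
    entropy_comp_of_injective μ (fun ω => (X ω, Y ω)) (injective_snd_mul_add_mul ha b)
  exact ⟨hXZ.symm, hXZ.trans hYZ.symm⟩

/-- Proposition 1: if `Z = aX + bY` with `a ≠ 0` and `b ≠ 0`, then
`H(X, Y) = H(X, Z) = H(Y, Z)`. -/
theorem jointEntropy_eq_of_linear_comb {Ω : Type*} [MeasurableSpace Ω]
    [Countable Ω] [DiscreteMeasurableSpace Ω]
    (μ : Measure Ω) [IsProbabilityMeasure μ]
    (X Y : Ω → ℝ) (hX : Measurable X) (hY : Measurable Y)
    (hXfin : (Set.range X).Finite) (hYfin : (Set.range Y).Finite)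
    (a b : ℝ) (ha : a ≠ 0) (hb : b ≠ 0) :
    entropy μ (fun ω => (X ω, Y ω)) =
        entropy μ (fun ω => (X ω, a * X ω + b * Y ω)) ∧
      entropy μ (fun ω => (X ω, a * X ω + b * Y ω)) =
        entropy μ (fun ω => (Y ω, a * X ω + b * Y ω)) :=
  jointEntropy_eq_of_linear_comb_general μ X Y a b ha hb
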